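/- arXiv:math/0604246 — 4 statements merged into one kernel-verified Lean document; each statement's English description precedes it below -/
import Mathlib

section
/- The information distance D_I(X,Y) = max(H(X|Y), H(Y|X)) satisfies the triangle inequality: D_I(X,Y) ≤ D_I(X,Z) + D_I(Z,Y). -/
open Real

/-- Shannon entropy of a discrete random variable `X` on a finite probability
space with weights `p`. -/
noncomputable def ent {Ω S : Type*} [Fintype Ω] [Fintype S] [DecidableEq S]
    (p : Ω → ℝ) (X : Ω → S) : ℝ :=
  ∑ s : S, Real.negMulLog (∑ ω ∈ Finset.univ.filter (fun ω => X ω = s), p ω)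

/-- Conditional entropy `H(X|Y) = H(X,Y) - H(Y)`. -/
noncomputable def condEnt {Ω S T : Type*} [Fintype Ω] [Fintype S] [Fintype T]
    [DecidableEq S] [DecidableEq T] (p : Ω → ℝ) (X : Ω → S) (Y : Ω → T) : ℝ :=
  ent p (fun ω => (X ω, Y ω)) - ent p Y

/-- Mutual information `I(X;Y) = H(X) + H(Y) - H(X,Y)`. -/
noncomputable def mutualInfo {Ω S T : Type*} [Fintype Ω] [Fintype S] [Fintype T]
    [DecidableEq S] [DecidableEq T] (p : Ω → ℝ) (X : Ω → S) (Y : Ω → T) : ℝ :=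
  ent p X + ent p Y - ent p (fun ω => (X ω, Y ω))


/-
Both `H(X|Y) ≤ H(X|Z) + H(Z|Y)` and its mirror image follow from `H(X,Y) ≤ H(Z,X,Y)` and the
submodularity `H(Z,X,Y) + H(Z) ≤ H(Z,X) + H(Z,Y)`. The latter is Gibbs' inequality
`∑ P log (Q / P) ≤ ∑ Q - ∑ P` comparing the joint law `P` of `(Z,X,Y)` with the coupling
`Q(u,s,t) = P(Z=u, X=s) P(Z=u, Y=t) / P(Z=u)` under which `X` and `Y` are independent given `Z`.
-/

open Finset

section Law

variable {Ω S T U : Type*} [Fintype Ω] [DecidableEq S] [DecidableEq T] [DecidableEq U]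
  (p : Ω → ℝ)

noncomputable def law (X : Ω → S) (s : S) : ℝ :=
  ∑ ω ∈ univ.filter (fun ω => X ω = s), p ω

noncomputable def condIndepCoupling (Z : Ω → U) (X : Ω → S) (Y : Ω → T) (w : U × S × T) : ℝ :=
  law p (fun ω => (Z ω, X ω)) (w.1, w.2.1) * law p (fun ω => (Z ω, Y ω)) (w.1, w.2.2) /
    law p Z w.1

variable {p}

lemma law_nonneg (hp : ∀ ω, 0 ≤ p ω) (X : Ω → S) (s : S) : 0 ≤ law p X s :=
  sum_nonneg fun _ _ => hp _

lemma le_law (hp : ∀ ω, 0 ≤ p ω) (X : Ω → S) (ω : Ω) : p ω ≤ law p X (X ω) :=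
  single_le_sum (fun ω _ => hp ω) (mem_filter.2 ⟨mem_univ ω, rfl⟩)

lemma law_le_law_comp (hp : ∀ ω, 0 ≤ p ω) (X : Ω → S) (g : S → T) (s : S) :
    law p X s ≤ law p (fun ω => g (X ω)) (g s) :=
  sum_le_sum_of_subset_of_nonneg (monotone_filter_right _ fun _ _ h => congrArg g h)
    fun _ _ _ => hp _

lemma condIndepCoupling_nonneg (hp : ∀ ω, 0 ≤ p ω) (Z : Ω → U) (X : Ω → S) (Y : Ω → T)
    (w : U × S × T) : 0 ≤ condIndepCoupling p Z X Y w :=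
  div_nonneg (mul_nonneg (law_nonneg hp _ _) (law_nonneg hp _ _)) (law_nonneg hp _ _)

variable (p)

lemma sum_law_mul [Fintype S] (X : Ω → S) (f : S → ℝ) :
    ∑ s, law p X s * f s = ∑ ω, p ω * f (X ω) := by
  rw [← sum_fiberwise univ X fun ω => p ω * f (X ω)]
  refine sum_congr rfl fun s _ => ?_
  rw [law, sum_mul]
  exact sum_congr rfl fun ω hω => by rw [(mem_filter.1 hω).2]

lemma sum_law [Fintype S] (X : Ω → S) : ∑ s, law p X s = ∑ ω, p ω := by
  simpa using sum_law_mul p X 1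

lemma sum_law_pair [Fintype T] (X : Ω → S) (Y : Ω → T) (s : S) :
    ∑ t, law p (fun ω => (X ω, Y ω)) (s, t) = law p X s := by
  rw [law, ← sum_fiberwise _ Y]
  simp only [law, filter_filter, Prod.ext_iff]

lemma sum_condIndepCoupling [Fintype S] [Fintype T] [Fintype U]
    (Z : Ω → U) (X : Ω → S) (Y : Ω → T) :
    ∑ w, condIndepCoupling p Z X Y w = ∑ ω, p ω := by
  simp only [condIndepCoupling, Fintype.sum_prod_type, ← sum_div, ← sum_mul_sum, sum_law_pair,
    mul_self_div_self, sum_law]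

lemma ent_eq_neg_sum_mul_log_law [Fintype S] (X : Ω → S) :
    ent p X = -∑ ω, p ω * log (law p X (X ω)) := by
  rw [← sum_law_mul p X fun s => log (law p X s), ← sum_neg_distrib]
  simp only [ent, law, Real.negMulLog, neg_mul]

end Law

section Entropy

variable {Ω S T U : Type*} [Fintype Ω] [Fintype S] [Fintype T] [Fintype U]
  [DecidableEq S] [DecidableEq T] [DecidableEq U] {p : Ω → ℝ}

lemma ent_comp_le (hp : ∀ ω, 0 ≤ p ω) (X : Ω → S) (g : S → T) :
    ent p (fun ω => g (X ω)) ≤ ent p X := by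
  rw [ent_eq_neg_sum_mul_log_law, ent_eq_neg_sum_mul_log_law, neg_le_neg_iff]
  refine sum_le_sum fun ω _ => ?_
  rcases (hp ω).eq_or_lt with hp0 | hpos
  · simp [← hp0]
  · exact mul_le_mul_of_nonneg_left (log_le_log (hpos.trans_le (le_law hp X ω))
      (law_le_law_comp hp X g (X ω))) (hp ω)

lemma ent_pair_comm (hp : ∀ ω, 0 ≤ p ω) (X : Ω → S) (Y : Ω → T) :
    ent p (fun ω => (X ω, Y ω)) = ent p (fun ω => (Y ω, X ω)) :=
  le_antisymm (ent_comp_le hp (fun ω => (Y ω, X ω)) Prod.swap)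
    (ent_comp_le hp (fun ω => (X ω, Y ω)) Prod.swap)

lemma sum_mul_log_div_law_le (hp : ∀ ω, 0 ≤ p ω) (X : Ω → S) {Q : S → ℝ}
    (hQ : ∀ s, 0 ≤ Q s) (hQpos : ∀ ω, 0 < p ω → 0 < Q (X ω)) :
    ∑ ω, p ω * log (Q (X ω) / law p X (X ω)) ≤ ∑ s, Q s - ∑ ω, p ω := by
  have hterm : ∀ ω, p ω * log (Q (X ω) / law p X (X ω))
      ≤ p ω * (Q (X ω) / law p X (X ω)) - p ω := by
    intro ω
    rcases (hp ω).eq_or_lt with hp0 | hpos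
    · simp [← hp0]
    · have hratio : 0 < Q (X ω) / law p X (X ω) :=
        div_pos (hQpos ω hpos) (hpos.trans_le (le_law hp X ω))
      nlinarith [log_le_sub_one_of_pos hratio]
  have hcancel : ∀ s, law p X s * (Q s / law p X s) ≤ Q s := fun s => by
    rcases (law_nonneg hp X s).eq_or_lt with h0 | hpos
    · simp [← h0, hQ s]
    · rw [mul_div_cancel₀ _ hpos.ne']
  calc ∑ ω, p ω * log (Q (X ω) / law p X (X ω))
      ≤ ∑ ω, (p ω * (Q (X ω) / law p X (X ω)) - p ω) := sum_le_sum fun ω _ => hterm ω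
    _ = ∑ s, law p X s * (Q s / law p X s) - ∑ ω, p ω := by
      rw [sum_sub_distrib, sum_law_mul p X fun s => Q s / law p X s]
    _ ≤ ∑ s, Q s - ∑ ω, p ω := by gcongr with s; exact hcancel s

lemma ent_triple_add_ent_le (hp : ∀ ω, 0 ≤ p ω) (Z : Ω → U) (X : Ω → S) (Y : Ω → T) :
    ent p (fun ω => (Z ω, X ω, Y ω)) + ent p Z ≤
      ent p (fun ω => (Z ω, X ω)) + ent p (fun ω => (Z ω, Y ω)) := by
  set W : Ω → U × S × T := fun ω => (Z ω, X ω, Y ω)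
  set ZX : Ω → U × S := fun ω => (Z ω, X ω)
  set ZY : Ω → U × T := fun ω => (Z ω, Y ω)
  have hsplit : ∀ ω, p ω * log (condIndepCoupling p Z X Y (W ω) / law p W (W ω)) =
      p ω * log (law p ZX (ZX ω)) + p ω * log (law p ZY (ZY ω))
        - p ω * log (law p Z (Z ω)) - p ω * log (law p W (W ω)) := by
    intro ω
    rcases (hp ω).eq_or_lt with hp0 | hpos
    · simp [← hp0]
    · have hZX := hpos.trans_le (le_law hp ZX ω)
      have hZY := hpos.trans_le (le_law hp ZY ω)
      have hZ := hpos.trans_le (le_law hp Z ω)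
      have hW := hpos.trans_le (le_law hp W ω)
      rw [condIndepCoupling, log_div (by positivity) hW.ne',
        log_div (by positivity) hZ.ne', log_mul hZX.ne' hZY.ne']
      ring
  have hgibbs := sum_mul_log_div_law_le hp W (condIndepCoupling_nonneg hp Z X Y) fun ω hω =>
    div_pos (mul_pos (hω.trans_le (le_law hp ZX ω)) (hω.trans_le (le_law hp ZY ω)))
      (hω.trans_le (le_law hp Z ω))
  rw [sum_condIndepCoupling, sub_self] at hgibbs
  simp only [hsplit, sum_sub_distrib, sum_add_distrib] at hgibbs
  simp only [ent_eq_neg_sum_mul_log_law]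
  linarith

lemma condEnt_le_condEnt_add_condEnt (hp : ∀ ω, 0 ≤ p ω) (X : Ω → S) (Y : Ω → T) (Z : Ω → U) :
    condEnt p X Y ≤ condEnt p X Z + condEnt p Z Y := by
  have hmono := ent_comp_le hp (fun ω => (Z ω, X ω, Y ω)) Prod.snd
  have hsubmod := ent_triple_add_ent_le hp Z X Y
  have hcomm := ent_pair_comm hp Z X
  unfold condEnt
  linarith

end Entropy

theorem informationDistance_triangle_general {Ω S T U : Type*} [Fintype Ω] [Fintype S] [Fintype T]
    [Fintype U] [DecidableEq S] [DecidableEq T] [DecidableEq U]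
    (p : Ω → ℝ) (hp0 : ∀ ω, 0 ≤ p ω)
    (X : Ω → S) (Y : Ω → T) (Z : Ω → U) :
    max (condEnt p X Y) (condEnt p Y X) ≤
      max (condEnt p X Z) (condEnt p Z X) + max (condEnt p Z Y) (condEnt p Y Z) := by
  have hXY := condEnt_le_condEnt_add_condEnt hp0 X Y Z
  have hYX := condEnt_le_condEnt_add_condEnt hp0 Y X Z
  refine max_le ?_ ?_
  · linarith [le_max_left (condEnt p X Z) (condEnt p Z X),
      le_max_left (condEnt p Z Y) (condEnt p Y Z)]
  · linarith [le_max_right (condEnt p X Z) (condEnt p Z X),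
      le_max_right (condEnt p Z Y) (condEnt p Y Z)]

theorem informationDistance_triangle {Ω S T U : Type*} [Fintype Ω] [Fintype S] [Fintype T]
    [Fintype U] [DecidableEq S] [DecidableEq T] [DecidableEq U]
    (p : Ω → ℝ) (hp0 : ∀ ω, 0 ≤ p ω) (hp1 : ∑ ω, p ω = 1)
    (X : Ω → S) (Y : Ω → T) (Z : Ω → U) :
    max (condEnt p X Y) (condEnt p Y X) ≤
      max (condEnt p X Z) (condEnt p Z X) + max (condEnt p Z Y) (condEnt p Y Z) :=
  informationDistance_triangle_general p hp0 X Y Z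
end

section
/- The normalized entropy distance d_E(X,Y) = (H(X|Y)+H(Y|X))/H(X,Y) satisfies the triangle inequality d_E(X,Y) ≤ d_E(X,Z) + d_E(Z,Y), provided all joint entropies involved are positive. -/
open Real

set_option linter.unusedSectionVars false
namespace EntAux
open Finset

lemma negMulLog_add_le {a b : ℝ} (ha : 0 ≤ a) (hb : 0 ≤ b) :
    Real.negMulLog (a + b) ≤ Real.negMulLog a + Real.negMulLog b := by
  have h1 : -(a * Real.log (a + b)) ≤ -(a * Real.log a) := by
    rcases eq_or_lt_of_le ha with h | h
    · simp [← h]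
    · have := Real.log_le_log h (by linarith : a ≤ a + b)
      nlinarith
  have h2 : -(b * Real.log (a + b)) ≤ -(b * Real.log b) := by
    rcases eq_or_lt_of_le hb with h | h
    · simp [← h]
    · have := Real.log_le_log h (by linarith : b ≤ a + b)
      nlinarith
  have : Real.negMulLog (a + b) = -(a * Real.log (a + b)) + -(b * Real.log (a + b)) := by
    simp [Real.negMulLog]; ring
  simp only [Real.negMulLog] at *
  linarith

lemma negMulLog_sum_le {ι : Type*} (s : Finset ι) (f : ι → ℝ) (hf : ∀ i ∈ s, 0 ≤ f i) :
    Real.negMulLog (∑ i ∈ s, f i) ≤ ∑ i ∈ s, Real.negMulLog (f i) := by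
  induction s using Finset.cons_induction with
  | empty => simp
  | cons i s his ih =>
    rw [Finset.sum_cons, Finset.sum_cons]
    have h1 : Real.negMulLog (f i + ∑ j ∈ s, f j) ≤
        Real.negMulLog (f i) + Real.negMulLog (∑ j ∈ s, f j) :=
      negMulLog_add_le (hf i (Finset.mem_cons_self _ _))
        (Finset.sum_nonneg fun j hj => hf j (Finset.mem_cons.2 (Or.inr hj)))
    have h2 := ih fun j hj => hf j (Finset.mem_cons.2 (Or.inr hj))
    linarith

lemma gibbs_term {a b : ℝ} (ha : 0 ≤ a) (hb : 0 ≤ b) (h0 : b = 0 → a = 0) :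
    a - b ≤ a * Real.log a - a * Real.log b := by
  rcases eq_or_lt_of_le ha with h | h
  · simp [← h]; linarith
  · have hb' : 0 < b := by
      rcases eq_or_lt_of_le hb with h' | h'
      · exact absurd (h0 h'.symm) (by linarith)
      · exact h'
    have hlog := Real.log_le_sub_one_of_pos (show 0 < b / a by positivity)
    rw [Real.log_div hb'.ne' h.ne'] at hlog
    have : a * (Real.log b - Real.log a) ≤ a * (b / a - 1) :=
      mul_le_mul_of_nonneg_left hlog ha
    have h3 : a * (b / a - 1) = b - a := by field_simp
    nlinarith

lemma gibbs {ι : Type*} [Fintype ι] (a b : ι → ℝ) (ha : ∀ i, 0 ≤ a i) (hb : ∀ i, 0 ≤ b i)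
    (h0 : ∀ i, b i = 0 → a i = 0) :
    (∑ i, a i) - (∑ i, b i) ≤ ∑ i, (a i * Real.log (a i) - a i * Real.log (b i)) := by
  rw [← Finset.sum_sub_distrib]
  exact Finset.sum_le_sum fun i _ => gibbs_term (ha i) (hb i) (h0 i)


noncomputable def fib {Ω : Type*} [Fintype Ω] (p : Ω → ℝ) {V : Type*} [DecidableEq V]
    (W : Ω → V) (v : V) : ℝ :=
  ∑ ω ∈ Finset.univ.filter (fun ω => W ω = v), p ω

variable {Ω : Type*} [Fintype Ω] {p : Ω → ℝ}

lemma ent_eq_fib {V : Type*} [Fintype V] [DecidableEq V] (W : Ω → V) :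
    ent p W = ∑ v : V, Real.negMulLog (fib p W v) := rfl

lemma fib_nonneg (hp0 : ∀ ω, 0 ≤ p ω) {V : Type*} [DecidableEq V] (W : Ω → V) (v : V) :
    0 ≤ fib p W v :=
  Finset.sum_nonneg fun ω _ => hp0 ω

lemma fib_sum {V : Type*} [Fintype V] [DecidableEq V] (W : Ω → V) :
    ∑ v : V, fib p W v = ∑ ω, p ω :=
  Finset.sum_fiberwise _ _ _

lemma fib_le_one (hp0 : ∀ ω, 0 ≤ p ω) (hp1 : ∑ ω, p ω = 1)
    {V : Type*} [Fintype V] [DecidableEq V] (W : Ω → V) (v : V) :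
    fib p W v ≤ 1 := by
  have h := Finset.single_le_sum (f := fib p W) (fun v _ => fib_nonneg hp0 W v)
    (Finset.mem_univ v)
  rw [fib_sum, hp1] at h
  exact h

lemma fib_split {V V' : Type*} [DecidableEq V] [Fintype V'] [DecidableEq V']
    (A : Ω → V) (B : Ω → V') (v : V) :
    fib p A v = ∑ w : V', ∑ ω ∈ Finset.univ.filter (fun ω => A ω = v ∧ B ω = w), p ω := by
  rw [fib, ← Finset.sum_fiberwise (Finset.univ.filter (fun ω => A ω = v)) B p]
  exact Finset.sum_congr rfl fun w _ => by rw [Finset.filter_filter]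

lemma fib_congr {V : Type*} [DecidableEq V] {A B : Ω → V} (h : ∀ ω, A ω = B ω) (v : V) :
    fib p A v = fib p B v := by
  unfold fib
  congr 1
  exact Finset.filter_congr fun ω _ => by rw [h ω]

variable {S T U : Type*} [Fintype S] [Fintype T] [Fintype U]
  [DecidableEq S] [DecidableEq T] [DecidableEq U]

lemma fib_pair_left (X : Ω → S) (Y : Ω → T) (s : S) :
    fib p X s = ∑ t : T, fib p (fun ω => (X ω, Y ω)) (s, t) := by
  rw [fib_split X Y s]
  refine Finset.sum_congr rfl fun t _ => ?_
  unfold fib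
  congr 1
  exact Finset.filter_congr fun ω _ => by simp [Prod.ext_iff]

lemma fib_pair_right (X : Ω → S) (Y : Ω → T) (t : T) :
    fib p Y t = ∑ s : S, fib p (fun ω => (X ω, Y ω)) (s, t) := by
  rw [fib_split Y X t]
  refine Finset.sum_congr rfl fun s _ => ?_
  unfold fib
  congr 1
  refine Finset.filter_congr fun ω _ => by simp [Prod.ext_iff]; tauto

-- triple marginals
lemma fib_trip_XY (X : Ω → S) (Y : Ω → T) (Z : Ω → U) (s : S) (t : T) :
    fib p (fun ω => (X ω, Y ω)) (s, t)
      = ∑ u : U, fib p (fun ω => (X ω, Y ω, Z ω)) (s, t, u) := by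
  rw [fib_split (fun ω => (X ω, Y ω)) Z (s, t)]
  refine Finset.sum_congr rfl fun u _ => ?_
  unfold fib
  congr 1
  refine Finset.filter_congr fun ω _ => by simp [Prod.ext_iff]; tauto

lemma fib_trip_XZ (X : Ω → S) (Y : Ω → T) (Z : Ω → U) (s : S) (u : U) :
    fib p (fun ω => (X ω, Z ω)) (s, u)
      = ∑ t : T, fib p (fun ω => (X ω, Y ω, Z ω)) (s, t, u) := by
  rw [fib_split (fun ω => (X ω, Z ω)) Y (s, u)]
  refine Finset.sum_congr rfl fun t _ => ?_
  unfold fib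
  congr 1
  refine Finset.filter_congr fun ω _ => by simp [Prod.ext_iff]; tauto

lemma fib_trip_YZ (X : Ω → S) (Y : Ω → T) (Z : Ω → U) (t : T) (u : U) :
    fib p (fun ω => (Y ω, Z ω)) (t, u)
      = ∑ s : S, fib p (fun ω => (X ω, Y ω, Z ω)) (s, t, u) := by
  rw [fib_split (fun ω => (Y ω, Z ω)) X (t, u)]
  refine Finset.sum_congr rfl fun s _ => ?_
  unfold fib
  congr 1
  refine Finset.filter_congr fun ω _ => by simp [Prod.ext_iff]; tauto

lemma fib_trip_Z (X : Ω → S) (Y : Ω → T) (Z : Ω → U) (u : U) :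
    fib p Z u = ∑ s : S, ∑ t : T, fib p (fun ω => (X ω, Y ω, Z ω)) (s, t, u) := by
  rw [fib_split Z (fun ω => (X ω, Y ω)) u, Fintype.sum_prod_type]
  refine Finset.sum_congr rfl fun s _ => Finset.sum_congr rfl fun t _ => ?_
  unfold fib
  congr 1
  refine Finset.filter_congr fun ω _ => by simp [Prod.ext_iff]; tauto

lemma ent_nonneg (hp0 : ∀ ω, 0 ≤ p ω) (hp1 : ∑ ω, p ω = 1)
    {V : Type*} [Fintype V] [DecidableEq V] (W : Ω → V) : 0 ≤ ent p W := by
  rw [ent_eq_fib]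
  exact Finset.sum_nonneg fun v _ =>
    Real.negMulLog_nonneg (fib_nonneg hp0 W v) (fib_le_one hp0 hp1 W v)

lemma ent_le_pair (hp0 : ∀ ω, 0 ≤ p ω) (X : Ω → S) (Y : Ω → T) :
    ent p X ≤ ent p (fun ω => (X ω, Y ω)) := by
  rw [ent_eq_fib, ent_eq_fib, Fintype.sum_prod_type]
  refine Finset.sum_le_sum fun s _ => ?_
  rw [fib_pair_left X Y s]
  exact negMulLog_sum_le _ _ fun t _ => fib_nonneg hp0 _ _

lemma ent_pair_swap (X : Ω → S) (Y : Ω → T) :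
    ent p (fun ω => (Y ω, X ω)) = ent p (fun ω => (X ω, Y ω)) := by
  rw [ent_eq_fib, ent_eq_fib]
  refine Fintype.sum_bijective Prod.swap Prod.swap_bijective _ _ fun ts => ?_
  obtain ⟨t, s⟩ := ts
  congr 1
  unfold fib
  congr 1
  exact Finset.filter_congr fun ω _ => by simp [Prod.ext_iff]; tauto

lemma ent_le_pair' (hp0 : ∀ ω, 0 ≤ p ω) (X : Ω → S) (Y : Ω → T) :
    ent p Y ≤ ent p (fun ω => (X ω, Y ω)) := by
  rw [← ent_pair_swap X Y]
  exact ent_le_pair hp0 Y X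

lemma ent_pair_le_add (hp0 : ∀ ω, 0 ≤ p ω) (hp1 : ∑ ω, p ω = 1) (X : Ω → S) (Y : Ω → T) :
    ent p (fun ω => (X ω, Y ω)) ≤ ent p X + ent p Y := by
  set q : S × T → ℝ := fib p (fun ω => (X ω, Y ω)) with hqdef
  have hq0 : ∀ v, 0 ≤ q v := fun v => fib_nonneg hp0 _ v
  have hqsum : (∑ v, q v) = 1 := by rw [hqdef, fib_sum, hp1]
  set b : S × T → ℝ := fun v => fib p X v.1 * fib p Y v.2 with hbdef
  have hb0 : ∀ v, 0 ≤ b v := fun v => mul_nonneg (fib_nonneg hp0 _ _) (fib_nonneg hp0 _ _)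
  have h1 : ∀ v : S × T, q v ≤ fib p X v.1 := fun v => by
    rw [fib_pair_left X Y v.1]
    exact Finset.single_le_sum (fun t _ => hq0 (v.1, t)) (Finset.mem_univ v.2)
  have h2 : ∀ v : S × T, q v ≤ fib p Y v.2 := fun v => by
    rw [fib_pair_right X Y v.2]
    exact Finset.single_le_sum (fun s _ => hq0 (s, v.2)) (Finset.mem_univ v.1)
  have h0 : ∀ v, b v = 0 → q v = 0 := fun v hb => by
    rcases mul_eq_zero.1 hb with h | h
    · have := h1 v; rw [h] at this; exact le_antisymm this (hq0 v)
    · have := h2 v; rw [h] at this; exact le_antisymm this (hq0 v)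
  have hbsum : (∑ v, b v) = 1 := by
    rw [Fintype.sum_prod_type]
    calc (∑ s, ∑ t, fib p X s * fib p Y t)
        = ∑ s, fib p X s * ∑ t, fib p Y t := by
          exact Finset.sum_congr rfl fun s _ => (Finset.mul_sum _ _ _).symm
      _ = (∑ s, fib p X s) * (∑ t, fib p Y t) := by rw [Finset.sum_mul]
      _ = 1 := by rw [fib_sum, fib_sum, hp1]; ring
  have eXY : ent p (fun ω => (X ω, Y ω)) = ∑ v, -(q v * Real.log (q v)) := by
    rw [ent_eq_fib]
    exact Finset.sum_congr rfl fun v _ => by rw [Real.negMulLog, neg_mul]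
  have eX : ent p X = ∑ v : S × T, -(q v * Real.log (fib p X v.1)) := by
    rw [ent_eq_fib, Fintype.sum_prod_type]
    refine Finset.sum_congr rfl fun s _ => ?_
    dsimp only
    rw [Finset.sum_neg_distrib, ← Finset.sum_mul, ← fib_pair_left X Y s,
      Real.negMulLog, neg_mul]
  have eY : ent p Y = ∑ v : S × T, -(q v * Real.log (fib p Y v.2)) := by
    rw [ent_eq_fib, Fintype.sum_prod_type, Finset.sum_comm]
    refine Finset.sum_congr rfl fun t _ => ?_
    dsimp only
    rw [Finset.sum_neg_distrib, ← Finset.sum_mul, ← fib_pair_right X Y t,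
      Real.negMulLog, neg_mul]
  have hterm : ∀ v, q v * Real.log (q v) - q v * Real.log (b v) ≤
      -(q v * Real.log (fib p X v.1)) + -(q v * Real.log (fib p Y v.2))
        + q v * Real.log (q v) := by
    intro v
    rcases eq_or_lt_of_le (hq0 v) with h | h
    · simp [← h]
    · have hx : 0 < fib p X v.1 := lt_of_lt_of_le h (h1 v)
      have hy : 0 < fib p Y v.2 := lt_of_lt_of_le h (h2 v)
      have hbe : q v * Real.log (b v) =
          q v * Real.log (fib p X v.1) + q v * Real.log (fib p Y v.2) := by
        simp only [hbdef]
        rw [Real.log_mul hx.ne' hy.ne', mul_add]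
      linarith
  have hgibbs := gibbs q b hq0 hb0 h0
  rw [hqsum, hbsum] at hgibbs
  have hsum2 := Finset.sum_le_sum (s := (Finset.univ : Finset (S × T)))
    (fun v _ => hterm v)
  have expand : (∑ v, (-(q v * Real.log (fib p X v.1)) + -(q v * Real.log (fib p Y v.2))
        + q v * Real.log (q v))) = ent p X + ent p Y - ent p (fun ω => (X ω, Y ω)) := by
    rw [eX, eY, eXY, Finset.sum_add_distrib, Finset.sum_add_distrib,
      Finset.sum_neg_distrib (f := fun v => q v * Real.log (q v))]
    ring
  rw [expand] at hsum2
  linarith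

variable (p) in
lemma key_ineq (hp0 : ∀ ω, 0 ≤ p ω) (hp1 : ∑ ω, p ω = 1)
    (X : Ω → S) (Y : Ω → T) (Z : Ω → U) :
    ent p (fun ω => (X ω, Y ω)) + ent p Z
      ≤ ent p (fun ω => (X ω, Z ω)) + ent p (fun ω => (Y ω, Z ω)) := by
  set q : S × T × U → ℝ := fib p (fun ω => (X ω, Y ω, Z ω)) with hqdef
  have hq0 : ∀ v, 0 ≤ q v := fun v => fib_nonneg hp0 _ v
  have hqsum : (∑ v, q v) = 1 := by rw [hqdef, fib_sum, hp1]
  have reorder : ∀ f : S × T × U → ℝ,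
      (∑ v, f v) = ∑ s, ∑ t, ∑ u, f (s, t, u) := fun f => by
    rw [Fintype.sum_prod_type]
    exact Finset.sum_congr rfl fun s _ => Fintype.sum_prod_type _
  have reorder' : ∀ f : S × T × U → ℝ,
      (∑ v, f v) = ∑ u, ∑ s, ∑ t, f (s, t, u) := fun f => by
    rw [reorder f]
    calc (∑ s, ∑ t, ∑ u, f (s, t, u))
        = ∑ s, ∑ u, ∑ t, f (s, t, u) :=
          Finset.sum_congr rfl fun s _ => Finset.sum_comm
      _ = ∑ u, ∑ s, ∑ t, f (s, t, u) := Finset.sum_comm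
  -- pointwise bounds by marginals
  have hqA : ∀ s t u, q (s, t, u) ≤ ∑ u', q (s, t, u') := fun s t u =>
    Finset.single_le_sum (fun u' _ => hq0 (s, t, u')) (Finset.mem_univ u)
  have hqB : ∀ s t u, q (s, t, u) ≤ ∑ t', q (s, t', u) := fun s t u =>
    Finset.single_le_sum (fun t' _ => hq0 (s, t', u)) (Finset.mem_univ t)
  have hqC : ∀ s t u, q (s, t, u) ≤ ∑ s', q (s', t, u) := fun s t u =>
    Finset.single_le_sum (fun s' _ => hq0 (s', t, u)) (Finset.mem_univ s)
  have hBD : ∀ s u, (∑ t', q (s, t', u)) ≤ ∑ s', ∑ t', q (s', t', u) := fun s u =>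
    Finset.single_le_sum (f := fun s' => ∑ t', q (s', t', u))
      (fun s' _ => Finset.sum_nonneg fun t' _ => hq0 _) (Finset.mem_univ s)
  -- entropy expressions
  have eXY : ent p (fun ω => (X ω, Y ω))
      = ∑ s, ∑ t, ∑ u, -(q (s, t, u) * Real.log (∑ u', q (s, t, u'))) := by
    rw [ent_eq_fib, Fintype.sum_prod_type]
    refine Finset.sum_congr rfl fun s _ => Finset.sum_congr rfl fun t _ => ?_
    rw [hqdef, fib_trip_XY X Y Z s t, Real.negMulLog, neg_mul]
    simp_rw [Finset.sum_neg_distrib, ← Finset.sum_mul]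
  have eXZ : ent p (fun ω => (X ω, Z ω))
      = ∑ s, ∑ t, ∑ u, -(q (s, t, u) * Real.log (∑ t', q (s, t', u))) := by
    have step1 : ent p (fun ω => (X ω, Z ω))
        = ∑ s, ∑ u, ∑ t, -(q (s, t, u) * Real.log (∑ t', q (s, t', u))) := by
      rw [ent_eq_fib, Fintype.sum_prod_type]
      refine Finset.sum_congr rfl fun s _ => Finset.sum_congr rfl fun u _ => ?_
      rw [hqdef, fib_trip_XZ X Y Z s u, Real.negMulLog, neg_mul]
      simp_rw [Finset.sum_neg_distrib, ← Finset.sum_mul]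
    rw [step1]
    exact Finset.sum_congr rfl fun s _ => Finset.sum_comm
  have eYZ : ent p (fun ω => (Y ω, Z ω))
      = ∑ s, ∑ t, ∑ u, -(q (s, t, u) * Real.log (∑ s', q (s', t, u))) := by
    have step1 : ent p (fun ω => (Y ω, Z ω))
        = ∑ t, ∑ u, ∑ s, -(q (s, t, u) * Real.log (∑ s', q (s', t, u))) := by
      rw [ent_eq_fib, Fintype.sum_prod_type]
      refine Finset.sum_congr rfl fun t _ => Finset.sum_congr rfl fun u _ => ?_
      rw [hqdef, fib_trip_YZ X Y Z t u, Real.negMulLog, neg_mul]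
      simp_rw [Finset.sum_neg_distrib, ← Finset.sum_mul]
    rw [step1]
    calc (∑ t, ∑ u, ∑ s, -(q (s, t, u) * Real.log (∑ s', q (s', t, u))))
        = ∑ t, ∑ s, ∑ u, -(q (s, t, u) * Real.log (∑ s', q (s', t, u))) :=
          Finset.sum_congr rfl fun t _ => Finset.sum_comm
      _ = ∑ s, ∑ t, ∑ u, -(q (s, t, u) * Real.log (∑ s', q (s', t, u))) :=
          Finset.sum_comm
  have eZ : ent p Z
      = ∑ s, ∑ t, ∑ u, -(q (s, t, u) * Real.log (∑ s', ∑ t', q (s', t', u))) := by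
    have step1 : ent p Z
        = ∑ u, ∑ s, ∑ t, -(q (s, t, u) * Real.log (∑ s', ∑ t', q (s', t', u))) := by
      rw [ent_eq_fib]
      refine Finset.sum_congr rfl fun u _ => ?_
      rw [hqdef, fib_trip_Z X Y Z u, Real.negMulLog, neg_mul]
      simp_rw [Finset.sum_neg_distrib, ← Finset.sum_mul]
    rw [step1]
    calc (∑ u, ∑ s, ∑ t, -(q (s, t, u) * Real.log (∑ s', ∑ t', q (s', t', u))))
        = ∑ s, ∑ u, ∑ t, -(q (s, t, u) * Real.log (∑ s', ∑ t', q (s', t', u))) :=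
          Finset.sum_comm
      _ = ∑ s, ∑ t, ∑ u, -(q (s, t, u) * Real.log (∑ s', ∑ t', q (s', t', u))) :=
          Finset.sum_congr rfl fun s _ => Finset.sum_comm
  -- the reference distribution
  set b : S × T × U → ℝ := fun v =>
    (∑ t', q (v.1, t', v.2.2)) * (∑ s', q (s', v.2.1, v.2.2))
      / (∑ s', ∑ t', q (s', t', v.2.2)) with hbdef
  have hb0 : ∀ v, 0 ≤ b v := by
    intro v
    simp only [hbdef]
    exact div_nonneg (mul_nonneg (Finset.sum_nonneg fun _ _ => hq0 _)
      (Finset.sum_nonneg fun _ _ => hq0 _))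
      (Finset.sum_nonneg fun _ _ => Finset.sum_nonneg fun _ _ => hq0 _)
  have h0 : ∀ v, b v = 0 → q v = 0 := by
    rintro ⟨s, t, u⟩ hb
    by_contra hne
    have hq : 0 < q (s, t, u) := (hq0 _).lt_of_ne (Ne.symm hne)
    have hB : 0 < ∑ t', q (s, t', u) := lt_of_lt_of_le hq (hqB s t u)
    have hC : 0 < ∑ s', q (s', t, u) := lt_of_lt_of_le hq (hqC s t u)
    have hD : 0 < ∑ s', ∑ t', q (s', t', u) := lt_of_lt_of_le hB (hBD s u)
    have : 0 < b (s, t, u) := by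
      simp only [hbdef]
      exact div_pos (mul_pos hB hC) hD
    rw [hb] at this
    exact lt_irrefl 0 this
  have hbsum : (∑ v, b v) = 1 := by
    rw [reorder' b]
    have per_u : ∀ u, (∑ s, ∑ t, b (s, t, u)) = ∑ s, ∑ t, q (s, t, u) := by
      intro u
      by_cases hD : (∑ s', ∑ t', q (s', t', u)) = 0
      · have hz : ∀ s t, q (s, t, u) = 0 := by
          intro s t
          have h1 := (Finset.sum_eq_zero_iff_of_nonneg
            (fun s' _ => Finset.sum_nonneg fun t' _ => hq0 (s', t', u))).1 hD s
            (Finset.mem_univ s)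
          exact (Finset.sum_eq_zero_iff_of_nonneg
            (fun t' _ => hq0 (s, t', u))).1 h1 t (Finset.mem_univ t)
        simp [hbdef, hz]
      · simp only [hbdef]
        have expand : (∑ s, ∑ t,
            (∑ t', q (s, t', u)) * (∑ s', q (s', t, u)) / (∑ s', ∑ t', q (s', t', u)))
            = (∑ s, ∑ t', q (s, t', u)) * (∑ t, ∑ s', q (s', t, u))
              / (∑ s', ∑ t', q (s', t', u)) := by
          simp_rw [div_eq_mul_inv, mul_assoc, ← Finset.mul_sum, ← Finset.sum_mul]
        rw [expand, Finset.sum_comm (f := fun t s' => q (s', t, u))]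
        field_simp
    rw [Finset.sum_congr rfl fun u _ => per_u u, ← reorder' q, hqsum]
  -- termwise Gibbs comparison
  have hterm : ∀ s t u,
      q (s, t, u) * Real.log (q (s, t, u)) - q (s, t, u) * Real.log (b (s, t, u)) ≤
        -(q (s, t, u) * Real.log (∑ t', q (s, t', u)))
        + -(q (s, t, u) * Real.log (∑ s', q (s', t, u)))
        - -(q (s, t, u) * Real.log (∑ u', q (s, t, u')))
        - -(q (s, t, u) * Real.log (∑ s', ∑ t', q (s', t', u))) := by
    intro s t u
    rcases eq_or_lt_of_le (hq0 (s, t, u)) with h | h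
    · simp [← h]
    · have hA : 0 < ∑ u', q (s, t, u') := lt_of_lt_of_le h (hqA s t u)
      have hB : 0 < ∑ t', q (s, t', u) := lt_of_lt_of_le h (hqB s t u)
      have hC : 0 < ∑ s', q (s', t, u) := lt_of_lt_of_le h (hqC s t u)
      have hD : 0 < ∑ s', ∑ t', q (s', t', u) := lt_of_lt_of_le hB (hBD s u)
      have hlogb : Real.log (b (s, t, u)) =
          Real.log (∑ t', q (s, t', u)) + Real.log (∑ s', q (s', t, u))
            - Real.log (∑ s', ∑ t', q (s', t', u)) := by
        simp only [hbdef]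
        rw [Real.log_div (mul_ne_zero hB.ne' hC.ne') hD.ne',
          Real.log_mul hB.ne' hC.ne']
      have hlogq : q (s, t, u) * Real.log (q (s, t, u))
          ≤ q (s, t, u) * Real.log (∑ u', q (s, t, u')) :=
        mul_le_mul_of_nonneg_left (Real.log_le_log h (hqA s t u)) h.le
      rw [hlogb]
      nlinarith [hlogq]
  -- assemble
  have hgibbs := gibbs q b hq0 hb0 h0
  rw [hqsum, hbsum, reorder (fun v => q v * Real.log (q v) - q v * Real.log (b v))]
    at hgibbs
  have master : (∑ s, ∑ t, ∑ u,
      (q (s, t, u) * Real.log (q (s, t, u)) - q (s, t, u) * Real.log (b (s, t, u))))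
      ≤ ∑ s, ∑ t, ∑ u,
        (-(q (s, t, u) * Real.log (∑ t', q (s, t', u)))
        + -(q (s, t, u) * Real.log (∑ s', q (s', t, u)))
        - -(q (s, t, u) * Real.log (∑ u', q (s, t, u')))
        - -(q (s, t, u) * Real.log (∑ s', ∑ t', q (s', t', u)))) :=
    Finset.sum_le_sum fun s _ => Finset.sum_le_sum fun t _ =>
      Finset.sum_le_sum fun u _ => hterm s t u
  have hsplit : (∑ s, ∑ t, ∑ u,
      (-(q (s, t, u) * Real.log (∑ t', q (s, t', u)))
      + -(q (s, t, u) * Real.log (∑ s', q (s', t, u)))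
      - -(q (s, t, u) * Real.log (∑ u', q (s, t, u')))
      - -(q (s, t, u) * Real.log (∑ s', ∑ t', q (s', t', u)))))
      = ent p (fun ω => (X ω, Z ω)) + ent p (fun ω => (Y ω, Z ω))
        - ent p (fun ω => (X ω, Y ω)) - ent p Z := by
    rw [eXY, eXZ, eYZ, eZ]
    simp only [Finset.sum_add_distrib, Finset.sum_sub_distrib]
  rw [hsplit] at master
  linarith

lemma arith {a b c P Q R : ℝ} (hP : 0 < P) (hQ : 0 < Q) (hR : 0 < R)
    (h1 : P + c ≤ Q + R) (haQ : a ≤ Q) (hcQ : c ≤ Q) (hbR : b ≤ R) (hcR : c ≤ R)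
    (hQs : Q ≤ a + c) (hRs : R ≤ b + c) (hPs : P ≤ a + b) (hc : 0 ≤ c) :
    ((P - b) + (P - a)) / P ≤ ((Q - c) + (Q - a)) / Q + ((R - b) + (R - c)) / R := by
  rw [div_add_div _ _ hQ.ne' hR.ne', div_le_div_iff₀ hP (mul_pos hQ hR)]
  rcases eq_or_lt_of_le hc with hc0 | hc0
  · have hI1 : a = Q := le_antisymm haQ (by linarith)
    have hI2 : b = R := le_antisymm hbR (by linarith)
    subst hI1; subst hI2; subst hc0
    nlinarith [mul_pos (mul_pos hQ hQ) hR, mul_pos (mul_pos hQ hR) hR]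
  · by_cases hcase : a + c - Q + (b + c - R) ≤ c
    · have key : (((P - b) + (P - a)) * (Q * R)) * c ≤
          ((((Q - c) + (Q - a)) * R + Q * ((R - b) + (R - c))) * P) * c := by
        nlinarith [mul_nonneg (mul_nonneg (mul_nonneg
            (by linarith : (0:ℝ) ≤ a + c - Q) hR.le) hP.le)
            (by linarith : (0:ℝ) ≤ Q - c),
          mul_nonneg (mul_nonneg (mul_nonneg
            (by linarith : (0:ℝ) ≤ b + c - R) hQ.le) hP.le)
            (by linarith : (0:ℝ) ≤ R - c),
          mul_nonneg (mul_nonneg (mul_nonneg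
            (by linarith : (0:ℝ) ≤ c - (a + c - Q) - (b + c - R)) hQ.le) hR.le) hP.le,
          mul_nonneg (mul_nonneg (mul_nonneg hc
            (by linarith : (0:ℝ) ≤ a + b - P)) hQ.le) hR.le]
      exact le_of_mul_le_mul_right key hc0
    · have hD : 0 < Q + R - c := by linarith
      have key : (((P - b) + (P - a)) * (Q * R)) * (Q + R - c) ≤
          ((((Q - c) + (Q - a)) * R + Q * ((R - b) + (R - c))) * P) * (Q + R - c) := by
        nlinarith [mul_nonneg (mul_nonneg (mul_nonneg hP.le hQ.le)
            (by linarith : (0:ℝ) ≤ Q - c)) (by linarith : (0:ℝ) ≤ R - (b + c - R)),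
          mul_nonneg (mul_nonneg (mul_nonneg hP.le hR.le)
            (by linarith : (0:ℝ) ≤ R - c)) (by linarith : (0:ℝ) ≤ Q - (a + c - Q)),
          mul_nonneg (mul_nonneg (mul_pos hQ hR).le
            (by linarith : (0:ℝ) ≤ a + c - Q + (b + c - R) - c))
            (by linarith : (0:ℝ) ≤ Q + R - c - P),
          mul_nonneg (mul_nonneg (mul_pos hQ hR).le
            (by linarith : (0:ℝ) ≤ Q + R - c - P)) hD.le]
      exact le_of_mul_le_mul_right key hD

end EntAux

theorem normalized_entropyDistance_triangle {Ω S T U : Type*} [Fintype Ω] [Fintype S]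
    [Fintype T] [Fintype U] [DecidableEq S] [DecidableEq T] [DecidableEq U]
    (p : Ω → ℝ) (hp0 : ∀ ω, 0 ≤ p ω) (hp1 : ∑ ω, p ω = 1)
    (X : Ω → S) (Y : Ω → T) (Z : Ω → U)
    (hXY : 0 < ent p (fun ω => (X ω, Y ω)))
    (hXZ : 0 < ent p (fun ω => (X ω, Z ω)))
    (hYZ : 0 < ent p (fun ω => (Y ω, Z ω))) :
    (condEnt p X Y + condEnt p Y X) / ent p (fun ω => (X ω, Y ω)) ≤
      (condEnt p X Z + condEnt p Z X) / ent p (fun ω => (X ω, Z ω)) +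
        (condEnt p Z Y + condEnt p Y Z) / ent p (fun ω => (Y ω, Z ω)) := by
  simp only [condEnt, EntAux.ent_pair_swap X Y, EntAux.ent_pair_swap X Z,
    EntAux.ent_pair_swap Y Z]
  exact EntAux.arith hXY hXZ hYZ (EntAux.key_ineq p hp0 hp1 X Y Z)
    (EntAux.ent_le_pair hp0 X Z) (EntAux.ent_le_pair' hp0 X Z)
    (EntAux.ent_le_pair hp0 Y Z) (EntAux.ent_le_pair' hp0 Y Z)
    (EntAux.ent_pair_le_add hp0 hp1 X Z) (EntAux.ent_pair_le_add hp0 hp1 Y Z)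
    (EntAux.ent_pair_le_add hp0 hp1 X Y) (EntAux.ent_nonneg hp0 hp1 Z)
end

section
/- For finite discrete random variables X and Y, max(H(X|Y), H(Y|X)) / max(H(X), H(Y)) = max( H(X|Y)/H(X), H(Y|X)/H(Y) ), provided H(X) > 0 and H(Y) > 0. -/
open Real

open Finset

lemma log_aux {a b c : ℝ} (ha : 0 ≤ a) (hab : a ≤ b) (hac : a ≤ c) :
    a - b * c ≤ a * Real.log a - a * Real.log b - a * Real.log c := by
  rcases ha.eq_or_lt with h | h
  · rw [← h] at hab hac ⊢
    simp
    positivity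
  · have hb : 0 < b := lt_of_lt_of_le h hab
    have hc : 0 < c := lt_of_lt_of_le h hac
    have hpos : 0 < b * c / a := by positivity
    have hlog := Real.log_le_sub_one_of_pos hpos
    rw [Real.log_div (by positivity) (ne_of_gt h), Real.log_mul hb.ne' hc.ne'] at hlog
    have h2 := mul_le_mul_of_nonneg_left hlog h.le
    have hane : a ≠ 0 := h.ne'
    field_simp at h2
    nlinarith

lemma mutualInfo_nonneg {Ω S T : Type*} [Fintype Ω] [Fintype S] [Fintype T]
    [DecidableEq S] [DecidableEq T]
    (p : Ω → ℝ) (hp0 : ∀ ω, 0 ≤ p ω) (hp1 : ∑ ω, p ω = 1)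
    (X : Ω → S) (Y : Ω → T) : 0 ≤ mutualInfo p X Y := by
  classical
  set q : S → T → ℝ := fun s t => ∑ ω ∈ univ.filter (fun ω => X ω = s ∧ Y ω = t), p ω
    with hqdef
  set qS : S → ℝ := fun s => ∑ ω ∈ univ.filter (fun ω => X ω = s), p ω with hqSdef
  set qT : T → ℝ := fun t => ∑ ω ∈ univ.filter (fun ω => Y ω = t), p ω with hqTdef
  have hq0 : ∀ s t, 0 ≤ q s t := fun s t => sum_nonneg fun ω _ => hp0 ω
  have hfilt : ∀ s t, (univ.filter (fun ω => X ω = s)).filter (fun ω => Y ω = t)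
      = univ.filter (fun ω => X ω = s ∧ Y ω = t) := by
    intro s t; rw [Finset.filter_filter]
  have hfilt' : ∀ s t, (univ.filter (fun ω => Y ω = t)).filter (fun ω => X ω = s)
      = univ.filter (fun ω => X ω = s ∧ Y ω = t) := by
    intro s t; rw [Finset.filter_filter]
    exact Finset.filter_congr (fun ω _ => by tauto)
  have hmargS : ∀ s, ∑ t, q s t = qS s := by
    intro s
    show _ = ∑ ω ∈ univ.filter (fun ω => X ω = s), p ω
    rw [← Finset.sum_fiberwise (univ.filter (fun ω => X ω = s)) Y p]
    exact Finset.sum_congr rfl fun t _ => by simp only [hqdef, hfilt]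
  have hmargT : ∀ t, ∑ s, q s t = qT t := by
    intro t
    show _ = ∑ ω ∈ univ.filter (fun ω => Y ω = t), p ω
    rw [← Finset.sum_fiberwise (univ.filter (fun ω => Y ω = t)) X p]
    exact Finset.sum_congr rfl fun s _ => by simp only [hqdef, hfilt']
  have hS1 : ∑ s, qS s = 1 := by
    rw [hqSdef]; rw [Finset.sum_fiberwise univ X p]; exact hp1
  have hT1 : ∑ t, qT t = 1 := by
    rw [hqTdef]; rw [Finset.sum_fiberwise univ Y p]; exact hp1
  have hleS : ∀ s t, q s t ≤ qS s := by
    intro s t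
    simp only [hqdef, hqSdef, ← hfilt]
    exact Finset.sum_le_sum_of_subset_of_nonneg (Finset.filter_subset _ _)
      (fun ω _ _ => hp0 ω)
  have hleT : ∀ s t, q s t ≤ qT t := by
    intro s t
    simp only [hqdef, hqTdef, ← hfilt']
    exact Finset.sum_le_sum_of_subset_of_nonneg (Finset.filter_subset _ _)
      (fun ω _ _ => hp0 ω)
  have hjoint : ent p (fun ω => (X ω, Y ω)) = ∑ s, ∑ t, Real.negMulLog (q s t) := by
    rw [ent, Fintype.sum_prod_type]
    refine Finset.sum_congr rfl fun s _ => Finset.sum_congr rfl fun t _ => ?_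
    simp only [hqdef]
    have hset : (univ.filter fun ω => (X ω, Y ω) = (s, t))
        = univ.filter fun ω => X ω = s ∧ Y ω = t := by
      ext ω; simp [Prod.ext_iff]
    rw [hset]
  have hXrw : ent p X = ∑ s, ∑ t, -(q s t * Real.log (qS s)) := by
    rw [ent]
    refine Finset.sum_congr rfl fun s _ => ?_
    show Real.negMulLog (qS s) = ∑ t, -(q s t * Real.log (qS s))
    rw [Finset.sum_neg_distrib, ← Finset.sum_mul, hmargS s, Real.negMulLog, neg_mul]
  have hYrw : ent p Y = ∑ s, ∑ t, -(q s t * Real.log (qT t)) := by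
    rw [ent, Finset.sum_comm]
    refine Finset.sum_congr rfl fun t _ => ?_
    show Real.negMulLog (qT t) = ∑ s, -(q s t * Real.log (qT t))
    rw [Finset.sum_neg_distrib, ← Finset.sum_mul, hmargT t, Real.negMulLog, neg_mul]
  have key : mutualInfo p X Y = ∑ s, ∑ t,
      (q s t * Real.log (q s t) - q s t * Real.log (qS s) - q s t * Real.log (qT t)) := by
    rw [mutualInfo, hjoint, hXrw, hYrw]
    rw [← Finset.sum_add_distrib, ← Finset.sum_sub_distrib]
    refine Finset.sum_congr rfl fun s _ => ?_
    rw [← Finset.sum_add_distrib, ← Finset.sum_sub_distrib]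
    refine Finset.sum_congr rfl fun t _ => ?_
    rw [Real.negMulLog]; ring
  have h0 : (0:ℝ) = ∑ s, ∑ t, (q s t - qS s * qT t) := by
    have h1 : ∑ s, ∑ t, q s t = 1 := by
      rw [Finset.sum_congr rfl fun s _ => hmargS s]; exact hS1
    have h2 : ∑ s, ∑ t, qS s * qT t = 1 := by
      simp only [← Finset.mul_sum, hT1, mul_one]
      exact hS1
    simp only [Finset.sum_sub_distrib, h1, h2, sub_self]
  rw [key, h0]
  refine Finset.sum_le_sum fun s _ => Finset.sum_le_sum fun t _ => ?_
  exact log_aux (hq0 s t) (hleS s t) (hleT s t)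

lemma ent_swap {Ω S T : Type*} [Fintype Ω] [Fintype S] [Fintype T]
    [DecidableEq S] [DecidableEq T] (p : Ω → ℝ) (X : Ω → S) (Y : Ω → T) :
    ent p (fun ω => (Y ω, X ω)) = ent p (fun ω => (X ω, Y ω)) := by
  rw [ent, ent]
  apply Fintype.sum_equiv (Equiv.prodComm T S)
  intro x
  congr 1
  have : (univ.filter fun ω => (Y ω, X ω) = x)
      = univ.filter fun ω => (X ω, Y ω) = (Equiv.prodComm T S) x := by
    ext ω
    simp [Prod.ext_iff, and_comm]
  rw [this]

lemma max_ratio {x y I : ℝ} (hx : 0 < x) (hy : 0 < y) (hI : 0 ≤ I) :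
    max (x - I) (y - I) / max x y = max ((x - I) / x) ((y - I) / y) := by
  rcases le_total x y with h | h
  · have hdiv : (x - I) / x ≤ (y - I) / y := by
      rw [div_le_div_iff₀ hx hy]
      nlinarith
    rw [max_eq_right h, max_eq_right (by linarith : x - I ≤ y - I), max_eq_right hdiv]
  · have hdiv : (y - I) / y ≤ (x - I) / x := by
      rw [div_le_div_iff₀ hy hx]
      nlinarith
    rw [max_eq_left h, max_eq_left (by linarith : y - I ≤ x - I), max_eq_left hdiv]

theorem dI_eq_max_ratio {Ω S T : Type*} [Fintype Ω] [Fintype S] [Fintype T]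
    [DecidableEq S] [DecidableEq T]
    (p : Ω → ℝ) (hp0 : ∀ ω, 0 ≤ p ω) (hp1 : ∑ ω, p ω = 1)
    (X : Ω → S) (Y : Ω → T) (hX : 0 < ent p X) (hY : 0 < ent p Y) :
    max (condEnt p X Y) (condEnt p Y X) / max (ent p X) (ent p Y) =
      max (condEnt p X Y / ent p X) (condEnt p Y X / ent p Y) := by
  have hI := mutualInfo_nonneg p hp0 hp1 X Y
  have ha : condEnt p X Y = ent p X - mutualInfo p X Y := by
    rw [condEnt, mutualInfo]; ring
  have hb : condEnt p Y X = ent p Y - mutualInfo p X Y := by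
    rw [condEnt, mutualInfo, ent_swap]; ring
  rw [ha, hb]
  exact max_ratio hX hY hI
end

section
/- For α ≤ 1/2, the complexity term C^{S,α}(X,Y) = α·min(H(X),H(Y)) + (1−α)·max(H(X),H(Y)) satisfies C^{S,α}(X,Y) ≤ C^{S,α}(X,Z) + C^{S,α}(Y,Z) − H(Z) for all nonnegative reals H(X), H(Y), H(Z). Moreover, for each α > 1/2 there exist nonnegative values for which this inequality fails. -/
open Real

/-- The complexity term `C^{S,α}(a,b) = α·min(a,b) + (1-α)·max(a,b)`. -/
noncomputable def Cs (α a b : ℝ) : ℝ := α * min a b + (1 - α) * max a b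

theorem Cs_submodular_iff_alpha_le_half :
    (∀ α x y z : ℝ, 0 ≤ α → α ≤ 1 / 2 → 0 ≤ x → 0 ≤ y → 0 ≤ z →
      Cs α x y ≤ Cs α x z + Cs α y z - z) ∧
    (∀ α : ℝ, 1 / 2 < α → α ≤ 1 →
      ∃ x y z : ℝ, 0 ≤ x ∧ 0 ≤ y ∧ 0 ≤ z ∧
        ¬ Cs α x y ≤ Cs α x z + Cs α y z - z) := by
  constructor
  · intro α x y z hα hα2 hx hy hz
    unfold Cs
    rcases le_total x y with h | h <;> rcases le_total x z with h1 | h1 <;>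
      rcases le_total y z with h2 | h2 <;>
      simp [min_eq_left, min_eq_right, max_eq_left, max_eq_right, h, h1, h2,
        min_def, max_def] <;> nlinarith
  · intro α hα hα1
    refine ⟨1, 1, 0, by norm_num, by norm_num, le_refl 0, ?_⟩
    unfold Cs
    simp only [min_self, max_self, min_eq_right (zero_le_one), max_eq_left (zero_le_one)]
    intro hcon
    nlinarith
end
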